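/- The star-product phase for the quartic scalar term: for factors with charge vectors Q₁ = charge of Φ^k, Q₂ = charge of Φ^l, Q₃ = charge of Φ_k†, Q₄ = charge of Φ_l†, where charge(Φ^k) = q[χ^i]+q[χ^j] with i ≠ j in {1,2,3} and ε^{kij}=1, and charge(Φ_k†) = q[χ^k]+q[χ^4] = -charge(Φ^k), taken in the cyclic order (Φ^k, Φ^l, Φ_k†, Φ_l†), the phase exponent -(1/2)Σ_{a<b} ω(Q_a, Q_b) equals -ε_{klm} γ_m, i.e. the total phase is exp(-i ε_{klm} γ_m). -/
import Mathlib


open Complex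

/-- `ω(q, q') = ε_{lmn} γ_l q_m q'_n = γ · (q × q')`. -/
noncomputable def omegaForm (γ q q' : Fin 3 → ℝ) : ℝ :=
  γ 0 * (q 1 * q' 2 - q 2 * q' 1) + γ 1 * (q 2 * q' 0 - q 0 * q' 2) +
    γ 2 * (q 0 * q' 1 - q 1 * q' 0)

/-- Standard basis charge vector: the charge of `Φ^k` is `e_k` and of `Φ_k†` is `-e_k`. -/
noncomputable def eCharge (k : Fin 3) : Fin 3 → ℝ := fun m => if m = k then 1 else 0

/-- The Levi-Civita symbol on `Fin 3`. -/
noncomputable def levi (a b c : Fin 3) : ℝ :=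
  (((b : ℝ) - (a : ℝ)) * ((c : ℝ) - (a : ℝ)) * ((c : ℝ) - (b : ℝ))) / 2

/-- The star-product phase of the quartic scalar term: for the ordered factors
`(Φ^k, Φ^l, Φ_k†, Φ_l†)` with `k ≠ l`, carrying charges `e_k, e_l, -e_k, -e_l`, the total
pairwise phase `exp(-(i/2) Σ_{a<b} ω(Q_a, Q_b))` equals `exp(-i ε_{klm} γ_m)`. -/
theorem quartic_star_phase (γ : Fin 3 → ℝ) (k l : Fin 3) (hkl : k ≠ l) :
    Complex.exp (-(I / 2) *
      ((omegaForm γ (eCharge k) (eCharge l)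
        + omegaForm γ (eCharge k) (-(eCharge k))
        + omegaForm γ (eCharge k) (-(eCharge l))
        + omegaForm γ (eCharge l) (-(eCharge k))
        + omegaForm γ (eCharge l) (-(eCharge l))
        + omegaForm γ (-(eCharge k)) (-(eCharge l)) : ℝ) : ℂ))
    = Complex.exp (-I * ((∑ m, levi k l m * γ m : ℝ) : ℂ)) := by
  congr 1
  fin_cases k <;> fin_cases l <;> simp_all <;>
    · simp only [omegaForm, eCharge, levi, Fin.sum_univ_three, Pi.neg_apply]
      norm_num
      push_cast
      ring
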